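/- The level of a field (the least number s such that -1 is a sum of s squares, when finite) is always a power of 2. -/

import Mathlib

section Pfister

variable {K : Type*} [Field K]

/-- `a` is a sum of `2^k` squares. -/
def SoSP (k : ℕ) (a : K) : Prop := ∃ x : Fin (2 ^ k) → K, a = ∑ i, x i ^ 2

/-- Padding: a sum of `m` squares with `m ≤ n` is a sum of `n` squares. -/
lemma sos_pad {m n : ℕ} (h : m ≤ n) (x : Fin m → K) :
    ∃ y : Fin n → K, ∑ i, x i ^ 2 = ∑ i, y i ^ 2 := by
  set g : ℕ → K := fun i => if h : i < m then x ⟨i, h⟩ else 0 with hg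
  refine ⟨fun i => g i, ?_⟩
  have h1 : ∑ i : Fin m, x i ^ 2 = ∑ i ∈ Finset.range m, g i ^ 2 := by
    rw [← Fin.sum_univ_eq_sum_range (fun i => g i ^ 2) m]
    refine Finset.sum_congr rfl fun i _ => ?_
    simp [hg, i.isLt]
  rw [h1, Fin.sum_univ_eq_sum_range (fun i => g i ^ 2) n]
  refine Finset.sum_subset (Finset.range_subset_range.2 h) fun i _ hi => ?_
  simp only [Finset.mem_range, not_lt] at hi
  simp [hg, Nat.not_lt.2 hi]

lemma sosP_zero (k : ℕ) : SoSP k (0 : K) := ⟨0, by simp⟩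

lemma sosP_sq (k : ℕ) (x : K) : SoSP k (x ^ 2) := by
  obtain ⟨y, hy⟩ := sos_pad (Nat.one_le_two_pow) (fun _ : Fin 1 => x)
  exact ⟨y, by simpa using hy⟩

/-- Splitting: sums of `2^(k+1)` squares are sums of two sums of `2^k` squares. -/
lemma sosP_succ_iff (k : ℕ) (a : K) :
    SoSP (k + 1) a ↔ ∃ b c : K, SoSP k b ∧ SoSP k c ∧ a = b + c := by
  constructor
  · rintro ⟨x, rfl⟩
    set g : ℕ → K := fun i => if h : i < 2 ^ (k + 1) then x ⟨i, h⟩ else 0 with hg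
    have hx : ∑ i : Fin (2 ^ (k + 1)), x i ^ 2 = ∑ i ∈ Finset.range (2 ^ k + 2 ^ k), g i ^ 2 := by
      rw [show 2 ^ k + 2 ^ k = 2 ^ (k + 1) by ring,
        ← Fin.sum_univ_eq_sum_range (fun i => g i ^ 2)]
      exact Finset.sum_congr rfl fun i _ => by simp [hg, i.isLt]
    rw [hx, Finset.sum_range_add]
    exact ⟨_, _, ⟨fun i => g i, by rw [Fin.sum_univ_eq_sum_range (fun i => g i ^ 2)]⟩,
      ⟨fun i => g (2 ^ k + i), by rw [Fin.sum_univ_eq_sum_range (fun i => g (2 ^ k + i) ^ 2)]⟩,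
      rfl⟩
  · rintro ⟨b, c, ⟨u, rfl⟩, ⟨v, rfl⟩, rfl⟩
    set g : ℕ → K := fun i => if h : i < 2 ^ k then u ⟨i, h⟩
      else if h' : i - 2 ^ k < 2 ^ k then v ⟨i - 2 ^ k, h'⟩ else 0 with hg
    refine ⟨fun i => g i, ?_⟩
    have h0 : ∑ i : Fin (2 ^ (k + 1)), g (i : ℕ) ^ 2
        = ∑ i ∈ Finset.range (2 ^ k + 2 ^ k), g i ^ 2 := by
      rw [show 2 ^ k + 2 ^ k = 2 ^ (k + 1) by ring,
        ← Fin.sum_univ_eq_sum_range (fun i => g i ^ 2)]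
    rw [h0, Finset.sum_range_add]
    congr 1
    · rw [← Fin.sum_univ_eq_sum_range (fun i => g i ^ 2)]
      exact Finset.sum_congr rfl fun i _ => by simp [hg, i.isLt]
    · rw [← Fin.sum_univ_eq_sum_range (fun i => g (2 ^ k + i) ^ 2)]
      refine Finset.sum_congr rfl fun i _ => ?_
      have h1 : ¬ (2 ^ k + (i : ℕ) < 2 ^ k) := by omega
      have h2 : 2 ^ k + (i : ℕ) - 2 ^ k = i := by omega
      simp [hg, h1, h2, i.isLt]

/-- Pfister: sums of `2^k` squares are closed under multiplication. -/
lemma sosP_mul : ∀ k : ℕ, ∀ a b : K, SoSP k a → SoSP k b → SoSP k (a * b) := by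
  intro k
  induction k with
  | zero =>
    rintro a b ⟨x, rfl⟩ ⟨y, rfl⟩
    refine ⟨fun i => x i * y i, ?_⟩
    have e : ∀ f : Fin (2 ^ 0) → K, ∑ i, f i = f 0 := fun f => Fin.sum_univ_one f
    rw [e, e, e]
    ring
  | succ k IH =>
    intro a b ha hb
    rw [sosP_succ_iff] at ha hb ⊢
    obtain ⟨b₁, b₂, hb₁, hb₂, rfl⟩ := ha
    obtain ⟨c₁, c₂, hc₁, hc₂, rfl⟩ := hb
    by_cases h1 : b₁ = 0
    · subst h1
      refine ⟨b₂ * c₁, b₂ * c₂, IH _ _ hb₂ hc₁, IH _ _ hb₂ hc₂, by ring⟩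
    by_cases h2 : b₂ = 0
    · subst h2
      refine ⟨b₁ * c₁, b₁ * c₂, IH _ _ hb₁ hc₁, IH _ _ hb₁ hc₂, by ring⟩
    by_cases hz : b₁ + b₂ = 0
    · exact ⟨0, 0, sosP_zero k, sosP_zero k, by rw [hz]; ring⟩
    -- main case
    have he₁ : SoSP k (c₁ * b₁⁻¹) := by
      have e : c₁ * b₁⁻¹ = c₁ * b₁ * (b₁⁻¹) ^ 2 := by field_simp
      rw [e]
      exact IH _ _ (IH _ _ hc₁ hb₁) (sosP_sq k _)
    have he₂ : SoSP k (c₂ * b₂⁻¹) := by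
      have e : c₂ * b₂⁻¹ = c₂ * b₂ * (b₂⁻¹) ^ 2 := by field_simp
      rw [e]
      exact IH _ _ (IH _ _ hc₂ hb₂) (sosP_sq k _)
    obtain ⟨u, hu⟩ := he₁
    obtain ⟨v, hv⟩ := he₂
    set z := b₁ + b₂ with hzdef
    set p : Fin (2 ^ k) → K := fun i => (b₁ * u i + b₂ * v i) / z with hp
    set q : Fin (2 ^ k) → K := fun i => (v i - u i) / z with hq
    have key : ∀ i, b₁ * u i ^ 2 + b₂ * v i ^ 2
        = z * p i ^ 2 + b₁ * b₂ * z * q i ^ 2 := by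
      intro i
      have hz' : b₁ + b₂ ≠ 0 := hz
      rw [hp, hq, hzdef]
      field_simp
      ring
    have hsum : c₁ + c₂ = z * (∑ i, p i ^ 2) + b₁ * b₂ * z * (∑ i, q i ^ 2) := by
      have hd1 : c₁ = b₁ * (c₁ * b₁⁻¹) := by field_simp
      have hd2 : c₂ = b₂ * (c₂ * b₂⁻¹) := by field_simp
      rw [hd1, hd2, hu, hv, Finset.mul_sum, Finset.mul_sum, Finset.mul_sum, Finset.mul_sum,
        ← Finset.sum_add_distrib, ← Finset.sum_add_distrib]
      exact Finset.sum_congr rfl fun i _ => key i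
    refine ⟨z ^ 2 * (∑ i, p i ^ 2), z ^ 2 * (b₁ * b₂ * (∑ i, q i ^ 2)), ?_, ?_, ?_⟩
    · exact IH _ _ (sosP_sq k z) ⟨p, rfl⟩
    · exact IH _ _ (sosP_sq k z) (IH _ _ (IH _ _ hb₁ hb₂) ⟨q, rfl⟩)
    · rw [hsum]; ring

end Pfister

theorem stmt11 {K : Type*} [Field K]
    (h : ∃ s : ℕ, ∃ x : Fin s → K, -1 = ∑ i, x i ^ 2) :
    ∃ k : ℕ, sInf {s : ℕ | ∃ x : Fin s → K, -1 = ∑ i, x i ^ 2} = 2 ^ k := by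
  set S : Set ℕ := {s : ℕ | ∃ x : Fin s → K, -1 = ∑ i, x i ^ 2} with hS
  have hne : S.Nonempty := h
  set s := sInf S with hs
  have hsmem : s ∈ S := Nat.sInf_mem hne
  have hs0 : s ≠ 0 := by
    intro h0
    rw [h0] at hsmem
    obtain ⟨x, hx⟩ := hsmem
    simp at hx
  set k := Nat.log 2 s with hk
  set n := 2 ^ k with hn
  have hn1 : 1 ≤ n := Nat.one_le_two_pow
  have hns : n ≤ s := Nat.pow_log_le_self 2 hs0
  have hsn : s < 2 * n := by
    have h2 := Nat.lt_pow_succ_log_self (by norm_num : 1 < 2) s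
    rw [pow_succ, mul_comm] at h2
    exact h2
  refine ⟨k, le_antisymm (Nat.sInf_le ?_) hns⟩
  -- show 2^k ∈ S, i.e. -1 is a sum of n squares
  obtain ⟨x, hx⟩ := hsmem
  set g : ℕ → K := fun i => if h : i < s then x ⟨i, h⟩ else 0 with hg
  have hsplit : (-1 : K) = (∑ i ∈ Finset.range n, g i ^ 2)
      + ∑ i ∈ Finset.range (s - n), g (n + i) ^ 2 := by
    rw [← Finset.sum_range_add, show n + (s - n) = s by omega, hx,
      ← Fin.sum_univ_eq_sum_range (fun i => g i ^ 2)]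
    exact Finset.sum_congr rfl fun i _ => by simp [hg, i.isLt]
  set A : K := ∑ i ∈ Finset.range n, g i ^ 2 with hA
  set B : K := ∑ i ∈ Finset.range (s - n), g (n + i) ^ 2 with hB
  have hAne : A ≠ 0 := by
    intro h0
    rw [h0, zero_add] at hsplit
    have hmem : s - n ∈ S := by
      refine ⟨fun i => g (n + (i : ℕ)), ?_⟩
      rw [hsplit, hB]
      exact (Fin.sum_univ_eq_sum_range (fun i => g (n + i) ^ 2) (s - n)).symm
    have hle := Nat.sInf_le hmem
    omega
  -- A and 1 + B are sums of n squares
  have hASoS : SoSP k A := by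
    refine ⟨fun i => g i, ?_⟩
    rw [hA]
    exact (Fin.sum_univ_eq_sum_range (fun i => g i ^ 2) n).symm
  have hBSoS : SoSP k (1 + B) := by
    have hle : s - n + 1 ≤ n := by omega
    set w : ℕ → K := fun i => if i = 0 then 1 else g (n + (i - 1)) with hw
    have hval : ∑ i : Fin (s - n + 1), w (i : ℕ) ^ 2 = 1 + B := by
      rw [Fin.sum_univ_eq_sum_range (fun i => w i ^ 2), Finset.sum_range_succ']
      have hc : ∀ i ∈ Finset.range (s - n), w (i + 1) ^ 2 = g (n + i) ^ 2 :=
        fun i _ => by simp [hw]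
      rw [Finset.sum_congr rfl hc, ← hB]
      simp [hw, add_comm]
    obtain ⟨y, hy⟩ := sos_pad hle (fun i : Fin (s - n + 1) => w i)
    exact ⟨y, by rw [← hy]; exact hval.symm⟩
  have hA1 : A = -(1 + B) := by linear_combination -hsplit
  have hBne : (1 : K) + B ≠ 0 := fun hh => hAne (by rw [hA1, hh, neg_zero])
  have hm : SoSP k (-1 : K) := by
    have hA' : (1 + B) * A * (A⁻¹) ^ 2 = -1 := by
      rw [hA1]
      field_simp
    rw [← hA']
    exact sosP_mul k _ _ (sosP_mul k _ _ hBSoS hASoS) (sosP_sq k _)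
  obtain ⟨y, hy⟩ := hm
  exact ⟨y, hy⟩
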